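/- arXiv:1907.01541 — 4 statements merged into one kernel-verified Lean document; each statement's English description precedes it below -/
import Mathlib

section
/- Let m_1, ..., m_n ≥ 1 and fix k with 1 ≤ k < n. Consider the map sending a tuple (j_1,...,j_n) ∈ ∏_i {0,...,m_i−1} to its truncation (j_1,...,j_k). For the matrix A_p consisting of the rows of the barycenter constraint matrix associated with the first k measures, two columns h and h' of A_p are equal if and only if the first k mixed-radix digits of h and h' coincide. Consequently A_p has exactly ∏_{i=1}^k m_i distinct columns, and each distinct column occurs exactly ∏_{i=k+1}^n m_i times. -/
open scoped Classical

namespace PricingAux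

variable {n : ℕ} (m : Fin n → ℕ)

def digit (i : Fin n) (h : ℕ) : ℕ :=
  (h / ∏ l ∈ Finset.univ.filter (fun l => i < l), m l) % m i

def P (t : ℕ) : ℕ := ∏ l ∈ Finset.univ.filter (fun l : Fin n => t ≤ l.val), m l

lemma P_zero : P m 0 = ∏ i, m i := by
  unfold P; congr 1; ext l; simp

lemma P_n : P m n = 1 := by
  unfold P
  rw [Finset.filter_false_of_mem, Finset.prod_empty]
  intro l _
  have := l.isLt; omega

lemma P_succ (t : ℕ) (ht : t < n) : P m t = m ⟨t, ht⟩ * P m (t + 1) := by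
  unfold P
  rw [show Finset.univ.filter (fun l : Fin n => t ≤ l.val)
      = insert ⟨t, ht⟩ (Finset.univ.filter (fun l : Fin n => t + 1 ≤ l.val)) by
    ext l; simp [Fin.ext_iff]; omega]
  rw [Finset.prod_insert (by simp)]

lemma digit_eq (t : ℕ) (ht : t < n) (h : ℕ) :
    digit m ⟨t, ht⟩ h = (h / P m (t + 1)) % m ⟨t, ht⟩ := by
  unfold digit P
  rw [show Finset.univ.filter (fun l : Fin n => (⟨t, ht⟩ : Fin n) < l)
      = Finset.univ.filter (fun l : Fin n => t + 1 ≤ l.val) by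
    ext l; simp [Fin.lt_def]]

lemma div_P_eq (h h' : ℕ) (hh : h < ∏ i, m i) (hh' : h' < ∏ i, m i)
    (t : ℕ) (htn : t ≤ n)
    (hd : ∀ i : Fin n, i.val < t → digit m i h = digit m i h') :
    h / P m t = h' / P m t := by
  induction t with
  | zero => rw [P_zero, Nat.div_eq_of_lt hh, Nat.div_eq_of_lt hh']
  | succ t ih =>
    have ht : t < n := htn
    have key : ∀ x : ℕ,
        x / P m (t + 1) = m ⟨t, ht⟩ * (x / P m t) + digit m ⟨t, ht⟩ x := by
      intro x
      rw [digit_eq m t ht x,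
        show x / P m t = x / P m (t + 1) / m ⟨t, ht⟩ by
          rw [P_succ m t ht, Nat.mul_comm, ← Nat.div_div_eq_div_mul]]
      exact (Nat.div_add_mod _ _).symm
    rw [key h, key h', ih (by omega) (fun i hi => hd i (by omega)),
      hd ⟨t, ht⟩ (Nat.lt_succ_self t)]

lemma digits_inj (h h' : Fin (∏ i, m i))
    (hd : ∀ i : Fin n, digit m i h.val = digit m i h'.val) : h = h' := by
  apply Fin.ext
  have := div_P_eq m h.val h'.val h.isLt h'.isLt n le_rfl (fun i _ => hd i)
  rwa [P_n, Nat.div_one, Nat.div_one] at this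

def E (hm : ∀ i, 1 ≤ m i) (h : Fin (∏ i, m i)) : ∀ i, Fin (m i) :=
  fun i => ⟨digit m i h.val, Nat.mod_lt _ (hm i)⟩

lemma E_bijective (hm : ∀ i, 1 ≤ m i) : Function.Bijective (E m hm) := by
  rw [Fintype.bijective_iff_injective_and_card]
  constructor
  · intro h h' he
    exact digits_inj m h h' (fun i => congrArg Fin.val (congrFun he i))
  · simp

variable (k : ℕ)

def trunc (g : ∀ i, Fin (m i)) : ∀ i : {i : Fin n // i.val < k}, Fin (m i.1) :=
  fun i => g i.1

def C (t : ∀ i : {i : Fin n // i.val < k}, Fin (m i.1)) :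
    {p : Σ i : Fin n, Fin (m i) // p.1.val < k} → ℝ :=
  fun p => if (t ⟨p.1.1, p.2⟩ : ℕ) = p.1.2.val then 1 else 0

lemma C_injective : Function.Injective (C m k) := by
  intro t t' h
  funext i
  have := congrFun h ⟨⟨i.1, t i⟩, i.2⟩
  simp only [C] at this
  rw [if_pos trivial] at this
  split_ifs at this with hc
  · exact (Fin.ext hc).symm
  · exact absurd this one_ne_zero

lemma trunc_surjective (hm : ∀ i, 1 ≤ m i) : Function.Surjective (trunc m k) := by
  intro t
  refine ⟨fun i => if hi : i.val < k then t ⟨i, hi⟩ else ⟨0, hm i⟩, ?_⟩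
  funext i
  exact dif_pos i.2

def fiberEquiv (c : ∀ i : {i : Fin n // i.val < k}, Fin (m i.1)) :
    {g : ∀ i, Fin (m i) // trunc m k g = c} ≃
      (∀ i : {i : Fin n // ¬ i.val < k}, Fin (m i.1)) where
  toFun g i := g.1 i.1
  invFun t := ⟨fun i => if hi : i.val < k then c ⟨i, hi⟩ else t ⟨i, hi⟩, by
    funext i; exact dif_pos i.2⟩
  left_inv g := by
    apply Subtype.ext; funext i
    by_cases hi : i.val < k
    · simp only [dif_pos hi]; exact (congrFun g.2 ⟨i, hi⟩).symm
    · exact dif_neg hi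
  right_inv t := by funext i; exact dif_neg i.2

end PricingAux
/-- Duplicate-column structure of the pricing submatrix `A_p` consisting of the
rows associated with the first `k` measures: two columns are equal iff their
first `k` mixed-radix digits coincide; there are exactly `∏_{i<k} m i` distinct
columns, each occurring `∏_{i≥k} m i` times. -/
theorem pricing_matrix_duplicate_columns (n k : ℕ) (m : Fin n → ℕ)
    (hm : ∀ i, 1 ≤ m i) (hk1 : 1 ≤ k) (hkn : k < n) :
    let digit : Fin n → ℕ → ℕ := fun i h =>
      (h / ∏ l ∈ Finset.univ.filter (fun l => i < l), m l) % m i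
    let col : Fin (∏ i, m i) → ({p : Σ i : Fin n, Fin (m i) // p.1.val < k} → ℝ) :=
      fun h p => if digit p.1.1 h.val = p.1.2.val then 1 else 0
    (∀ h h' : Fin (∏ i, m i),
        col h = col h' ↔ ∀ i : Fin n, i.val < k → digit i h.val = digit i h'.val) ∧
    (Finset.univ.image col).card
        = ∏ i ∈ Finset.univ.filter (fun i : Fin n => i.val < k), m i ∧
    ∀ h : Fin (∏ i, m i),
      (Finset.univ.filter (fun h' : Fin (∏ i, m i) => col h' = col h)).card
        = ∏ i ∈ Finset.univ.filter (fun i : Fin n => ¬ i.val < k), m i := by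
  intro digit col
  have hdig : ∀ (i : Fin n) (h : ℕ), digit i h = PricingAux.digit m i h := fun _ _ => rfl
  -- column = C ∘ trunc ∘ E
  have hcolC : col = fun h =>
      PricingAux.C m k (PricingAux.trunc m k (PricingAux.E m hm h)) := rfl
  -- Part 1
  have part1 : ∀ h h' : Fin (∏ i, m i),
      col h = col h' ↔ ∀ i : Fin n, i.val < k → digit i h.val = digit i h'.val := by
    intro h h'
    constructor
    · intro hcol i hik
      have hlt : digit i h.val < m i := Nat.mod_lt _ (hm i)
      have hp := congrFun hcol ⟨⟨i, ⟨digit i h.val, hlt⟩⟩, hik⟩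
      simp only [col] at hp
      rw [if_pos trivial] at hp
      by_contra hne
      rw [if_neg (fun e => hne e.symm)] at hp
      exact one_ne_zero hp
    · intro hd
      funext p
      simp only [col]
      rw [hd p.1.1 p.2]
  -- equality of columns via truncated digit vectors
  have hq : ∀ h h' : Fin (∏ i, m i),
      PricingAux.trunc m k (PricingAux.E m hm h)
        = PricingAux.trunc m k (PricingAux.E m hm h')
      ↔ ∀ i : Fin n, i.val < k → digit i h.val = digit i h'.val := by
    intro h h'
    constructor
    · intro e i hi
      exact congrArg Fin.val (congrFun e ⟨i, hi⟩)
    · intro hd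
      funext i
      exact Fin.ext (hd i.1 i.2)
  have hcol_iff : ∀ h h' : Fin (∏ i, m i),
      col h = col h' ↔
        PricingAux.trunc m k (PricingAux.E m hm h)
          = PricingAux.trunc m k (PricingAux.E m hm h') := by
    intro h h'
    rw [part1 h h', hq h h']
  refine ⟨part1, ?_, ?_⟩
  · -- Part 2
    have hsurj : Function.Surjective
        (fun h : Fin (∏ i, m i) => PricingAux.trunc m k (PricingAux.E m hm h)) :=
      (PricingAux.trunc_surjective m k hm).comp (PricingAux.E_bijective m hm).2
    rw [hcolC, show (fun h : Fin (∏ i, m i) =>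
        PricingAux.C m k (PricingAux.trunc m k (PricingAux.E m hm h)))
      = (PricingAux.C m k) ∘ (fun h => PricingAux.trunc m k (PricingAux.E m hm h)) from rfl,
      ← Finset.image_image, Finset.card_image_of_injective _ (PricingAux.C_injective m k),
      Finset.image_univ_of_surjective hsurj, Finset.card_univ, Fintype.card_pi]
    simp only [Fintype.card_fin]
    exact (Finset.prod_subtype _ (by simp) m).symm
  · -- Part 3
    intro h
    have hfilter : Finset.univ.filter (fun h' : Fin (∏ i, m i) => col h' = col h)
        = Finset.univ.filter (fun h' : Fin (∏ i, m i) =>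
            PricingAux.trunc m k (PricingAux.E m hm h')
              = PricingAux.trunc m k (PricingAux.E m hm h)) := by
      ext h'
      simp only [Finset.mem_filter, Finset.mem_univ, true_and]
      exact hcol_iff h' h
    rw [hfilter, ← Fintype.card_subtype]
    have e1 : {h' : Fin (∏ i, m i) //
          PricingAux.trunc m k (PricingAux.E m hm h')
            = PricingAux.trunc m k (PricingAux.E m hm h)}
        ≃ {g : ∀ i, Fin (m i) //
            PricingAux.trunc m k g = PricingAux.trunc m k (PricingAux.E m hm h)} :=
      (Equiv.subtypeEquiv (Equiv.ofBijective _ (PricingAux.E_bijective m hm))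
        (fun h' => Iff.rfl))
    rw [Fintype.card_congr (e1.trans (PricingAux.fiberEquiv m k _)), Fintype.card_pi]
    simp only [Fintype.card_fin]
    exact (Finset.prod_subtype _ (by simp) m).symm
end

section
/- The greedy construction terminates and produces a feasible solution: given finite support sets S_1,...,S_n with probability weights d_i, the process that repeatedly selects, for each measure, the first not-yet-fully-supplied support point, assigns to the resulting tuple the minimum remaining demand among the selected points, and subtracts that mass from each selected point's remaining demand, terminates with a nonnegative vector w satisfying Σ_{s : s_i = x} w(s) = d_i(x) for every i and x ∈ S_i. -/
open scoped Classical

/-- One pass of Algorithm 3 (greedy construction) with explicit fuel: at each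
step, for each measure select the first support point whose remaining demand is
nonzero, assign the minimum remaining demand among the selected points to that
tuple, and subtract it from each selected point's remaining demand. -/
noncomputable def greedy (n : ℕ) [NeZero n] (m : Fin n → ℕ) :
    ℕ → (∀ i, Fin (m i) → ℝ) → ((∀ i, Fin (m i)) → ℝ)
  | 0, _ => 0
  | (fuel + 1), b =>
    if h : ∀ i, (Finset.univ.filter (fun j => b i j ≠ 0)).Nonempty then
      let sel : ∀ i, Fin (m i) :=
        fun i => (Finset.univ.filter (fun j => b i j ≠ 0)).min' (h i)
      let mu : ℝ := Finset.univ.inf' Finset.univ_nonempty (fun i => b i (sel i))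
      fun s => (if s = sel then mu else 0) +
        greedy n m fuel (fun i j => if j = sel i then b i j - mu else b i j) s
    else 0

/-!
Each pass removes the mass `μ = minᵢ bᵢ(selᵢ)` from one point of every row, so the
remaining demands stay nonnegative with equal row sums, while the selected point of a
row attaining the minimum leaves the support. Hence the total support size, at most
`∑ i, m i`, drops at every pass, and once some row is empty all rows are zero because
they carry the same total mass. Adding back `μ` at the selected tuple restores the
marginals, so the constraints are preserved pass by pass.
-/

open Finset

namespace Greedy

variable {n : ℕ} {m : Fin n → ℕ}

noncomputable def support (b : ∀ i, Fin (m i) → ℝ) (i : Fin n) : Finset (Fin (m i)) :=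
  univ.filter (fun j => b i j ≠ 0)

noncomputable def supportCard (b : ∀ i, Fin (m i) → ℝ) : ℕ :=
  ∑ i, #(support b i)

def deplete (b : ∀ i, Fin (m i) → ℝ) (sel : ∀ i, Fin (m i)) (μ : ℝ) :
    ∀ i, Fin (m i) → ℝ :=
  fun i j => if j = sel i then b i j - μ else b i j

def IsFeasiblePlan (b : ∀ i, Fin (m i) → ℝ) (w : (∀ i, Fin (m i)) → ℝ) : Prop :=
  (∀ s, 0 ≤ w s) ∧ ∀ i x, ∑ s ∈ univ.filter (fun s : ∀ i, Fin (m i) => s i = x), w s = b i x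

@[simp]
theorem mem_support {b : ∀ i, Fin (m i) → ℝ} {i : Fin n} {j : Fin (m i)} :
    j ∈ support b i ↔ b i j ≠ 0 := by
  simp [support]

theorem supportCard_le (b : ∀ i, Fin (m i) → ℝ) : supportCard b ≤ ∑ i, m i :=
  (sum_le_sum fun i _ => card_le_univ (support b i)).trans_eq (by simp)

theorem eq_zero_of_supportCard_eq_zero {b : ∀ i, Fin (m i) → ℝ} (h : supportCard b = 0)
    (i : Fin n) (j : Fin (m i)) : b i j = 0 := by
  have : support b i = ∅ := card_eq_zero.mp (sum_eq_zero_iff.mp h i (mem_univ i))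
  simpa using (eq_empty_iff_forall_notMem.mp this j)

theorem eq_zero_of_support_eq_empty {b : ∀ i, Fin (m i) → ℝ} {c : ℝ}
    (hb : ∀ i j, 0 ≤ b i j) (hc : ∀ i, ∑ j, b i j = c) {i₀ : Fin n}
    (h₀ : support b i₀ = ∅) (i : Fin n) (j : Fin (m i)) : b i j = 0 := by
  have hc₀ : c = 0 := by
    rw [← hc i₀]
    exact sum_eq_zero fun j _ => by simpa using eq_empty_iff_forall_notMem.mp h₀ j
  exact (sum_eq_zero_iff_of_nonneg fun j _ => hb i j).mp ((hc i).trans hc₀) j (mem_univ j)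

theorem deplete_add_ite (b : ∀ i, Fin (m i) → ℝ) (sel : ∀ i, Fin (m i)) (μ : ℝ) (i : Fin n)
    (x : Fin (m i)) : deplete b sel μ i x + (if sel i = x then μ else 0) = b i x := by
  by_cases hx : sel i = x
  · subst hx; simp [deplete]
  · simp [deplete, hx, Ne.symm hx]

section deplete

variable {b : ∀ i, Fin (m i) → ℝ} {sel : ∀ i, Fin (m i)} {μ : ℝ}

theorem deplete_nonneg (hb : ∀ i j, 0 ≤ b i j) (hμ : ∀ i, μ ≤ b i (sel i)) (i : Fin n)
    (j : Fin (m i)) : 0 ≤ deplete b sel μ i j := by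
  unfold deplete
  split_ifs with hj
  · subst hj; linarith [hμ i]
  · exact hb i j

theorem sum_deplete (i : Fin n) : ∑ j, deplete b sel μ i j = ∑ j, b i j - μ := by
  have := sum_congr rfl fun x (_ : x ∈ univ) => deplete_add_ite b sel μ i x
  rw [sum_add_distrib, sum_ite_eq] at this
  simp only [mem_univ, if_true] at this
  linarith

theorem support_deplete_subset (hsel : ∀ i, sel i ∈ support b i) (i : Fin n) :
    support (deplete b sel μ) i ⊆ support b i := by
  intro j hj
  by_cases hji : j = sel i
  · exact hji ▸ hsel i
  · simpa [deplete, hji] using hj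

theorem supportCard_deplete_lt (hsel : ∀ i, sel i ∈ support b i) {i₀ : Fin n}
    (hμ : μ = b i₀ (sel i₀)) : supportCard (deplete b sel μ) < supportCard b := by
  refine sum_lt_sum (fun i _ => card_le_card (support_deplete_subset hsel i))
    ⟨i₀, mem_univ i₀, card_lt_card ⟨support_deplete_subset hsel i₀, fun hsub => ?_⟩⟩
  simpa [deplete, hμ] using hsub (hsel i₀)

theorem IsFeasiblePlan.add_single {w : (∀ i, Fin (m i)) → ℝ}
    (hw : IsFeasiblePlan (deplete b sel μ) w) (hμ : 0 ≤ μ) :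
    IsFeasiblePlan b (fun s => (if s = sel then μ else 0) + w s) := by
  refine ⟨fun s => add_nonneg (by split_ifs <;> simp [hμ]) (hw.1 s), fun i x => ?_⟩
  rw [sum_add_distrib, hw.2 i x, sum_ite_eq', add_comm, ← deplete_add_ite b sel μ i x]
  simp

end deplete

theorem isFeasiblePlan_zero {b : ∀ i, Fin (m i) → ℝ} (hb : ∀ i j, b i j = 0) :
    IsFeasiblePlan b 0 :=
  ⟨fun _ => le_rfl, fun i x => by simp [hb i x]⟩

noncomputable def selection (b : ∀ i, Fin (m i) → ℝ) (h : ∀ i, (support b i).Nonempty) :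
    ∀ i, Fin (m i) :=
  fun i => (support b i).min' (h i)

theorem selection_mem_support {b : ∀ i, Fin (m i) → ℝ} (h : ∀ i, (support b i).Nonempty)
    (i : Fin n) : selection b h i ∈ support b i :=
  min'_mem _ _

section greedy

variable [NeZero n]

noncomputable def minDemand (b : ∀ i, Fin (m i) → ℝ) (sel : ∀ i, Fin (m i)) : ℝ :=
  univ.inf' univ_nonempty fun i => b i (sel i)

theorem minDemand_le (b : ∀ i, Fin (m i) → ℝ) (sel : ∀ i, Fin (m i)) (i : Fin n) :
    minDemand b sel ≤ b i (sel i) :=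
  inf'_le _ (mem_univ i)

theorem minDemand_nonneg {b : ∀ i, Fin (m i) → ℝ} (hb : ∀ i j, 0 ≤ b i j)
    (sel : ∀ i, Fin (m i)) : 0 ≤ minDemand b sel :=
  le_inf' _ _ fun i _ => hb i (sel i)

theorem exists_minDemand_eq (b : ∀ i, Fin (m i) → ℝ) (sel : ∀ i, Fin (m i)) :
    ∃ i, minDemand b sel = b i (sel i) :=
  let ⟨i, _, hi⟩ := exists_mem_eq_inf' univ_nonempty fun i => b i (sel i)
  ⟨i, hi⟩

theorem greedy_succ {b : ∀ i, Fin (m i) → ℝ} (fuel : ℕ) (h : ∀ i, (support b i).Nonempty) :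
    greedy n m (fuel + 1) b = fun s =>
      (if s = selection b h then minDemand b (selection b h) else 0) +
        greedy n m fuel (deplete b (selection b h) (minDemand b (selection b h))) s := by
  rw [greedy]
  exact dif_pos h

theorem greedy_succ_of_not_nonempty {b : ∀ i, Fin (m i) → ℝ} (fuel : ℕ)
    (h : ¬∀ i, (support b i).Nonempty) : greedy n m (fuel + 1) b = 0 := by
  rw [greedy]
  exact dif_neg h

theorem isFeasiblePlan_greedy (fuel : ℕ) {b : ∀ i, Fin (m i) → ℝ} {c : ℝ}
    (hb : ∀ i j, 0 ≤ b i j) (hc : ∀ i, ∑ j, b i j = c) (hfuel : supportCard b ≤ fuel) :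
    IsFeasiblePlan b (greedy n m fuel b) := by
  induction fuel generalizing b c with
  | zero =>
    exact isFeasiblePlan_zero (eq_zero_of_supportCard_eq_zero (Nat.le_zero.mp hfuel))
  | succ fuel ih =>
    by_cases h : ∀ i, (support b i).Nonempty
    · obtain ⟨i₀, hi₀⟩ := exists_minDemand_eq b (selection b h)
      have hdec := supportCard_deplete_lt (selection_mem_support h) hi₀
      rw [greedy_succ fuel h]
      refine IsFeasiblePlan.add_single ?_ (minDemand_nonneg hb _)
      exact ih (deplete_nonneg hb (minDemand_le b _)) (fun i => by rw [sum_deplete, hc i])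
        (by omega)
    · obtain ⟨i₀, hi₀⟩ := not_forall.mp h
      rw [greedy_succ_of_not_nonempty fuel h]
      exact isFeasiblePlan_zero
        (eq_zero_of_support_eq_empty hb hc (not_nonempty_iff_eq_empty.mp hi₀))

end greedy

end Greedy

/-- Algorithm 3 terminates (within `∑ i, m i` steps) and produces a nonnegative
vector satisfying all transport constraints. -/
theorem greedy_terminates_feasible (n : ℕ) [NeZero n] (m : Fin n → ℕ)
    (d : ∀ i, Fin (m i) → ℝ) (hd0 : ∀ i j, 0 ≤ d i j)
    (hd1 : ∀ i, ∑ j, d i j = 1) :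
    (∀ s : ∀ i, Fin (m i), 0 ≤ greedy n m (∑ i, m i) d s) ∧
    (∀ i (x : Fin (m i)),
      ∑ s ∈ Finset.univ.filter (fun s : ∀ i, Fin (m i) => s i = x),
        greedy n m (∑ i, m i) d s = d i x) :=
  Greedy.isFeasiblePlan_greedy _ hd0 hd1 (Greedy.supportCard_le d)
end

section
/- The greedy solution is a vertex: the feasible point w produced by the greedy construction is a vertex of the polytope {w ∈ R^N : Aw = d, w ≥ 0}, where A is the barycenter constraint matrix and d the vector of support-point masses. Equivalently, there exists a cost vector c such that w is the unique minimizer of c^T w over this polytope. -/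
open scoped Classical

/-! The greedy plan `w` is a coupling of the marginals `d`, and it is *rigid*: every coupling
whose support lies in that of `w` equals `w`. Rigidity goes by induction along the greedy steps.
At each step some measure `i₀` exhausts its selected point `x`, so the rest of the greedy plan
gives no mass to tuples through `x` in coordinate `i₀`; a coupling supported where `w` is must
then put all of the mass of `x` on the selected tuple, and subtracting it leaves a coupling of the
residual marginals supported where the rest of the greedy plan is. For a rigid feasible point,
the cost vanishing on its support and equal to `1` off it has that point as unique minimiser. -/

open Finset Function

theorem exists_cost_unique_minimizer {ι : Type*} [Fintype ι] (P : (ι → ℝ) → Prop)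
    {w : ι → ℝ} (hP : ∀ w', P w' → ∀ s, 0 ≤ w' s)
    (hrigid : ∀ w', P w' → support w' ⊆ support w → w' = w) :
    ∃ c : ι → ℝ, ∀ w', P w' →
      (∑ s, c s * w s ≤ ∑ s, c s * w' s) ∧ (∑ s, c s * w' s = ∑ s, c s * w s → w' = w) := by
  refine ⟨(support w)ᶜ.indicator 1, fun w' hw' => ?_⟩
  have hterm (s : ι) : 0 ≤ (support w)ᶜ.indicator 1 s * w' s :=
    mul_nonneg (Set.indicator_nonneg (fun _ _ => zero_le_one) s) (hP w' hw' s)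
  have hzero : ∑ s, (support w)ᶜ.indicator 1 s * w s = 0 :=
    sum_eq_zero fun s _ => by by_cases hs : w s = 0 <;> simp [hs]
  rw [hzero]
  refine ⟨sum_nonneg fun s _ => hterm s, fun heq => hrigid w' hw' fun s hs => ?_⟩
  by_contra hws
  have hs0 := (sum_eq_zero_iff_of_nonneg fun s _ => hterm s).1 heq s (mem_univ s)
  rw [Set.indicator_of_mem hws, Pi.one_apply, one_mul] at hs0
  exact hs hs0

lemma eq_zero_of_support_subset_zero {ι : Type*} {w : ι → ℝ}
    (h : support w ⊆ support (0 : ι → ℝ)) : w = 0 :=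
  support_eq_empty_iff.1 (Set.subset_empty_iff.1 (by simpa using h))

section Marginal

variable {ι : Type*} [Fintype ι] [DecidableEq ι] {α : ι → Type*} [∀ i, Fintype (α i)]
  [∀ i, DecidableEq (α i)]

def marginal (w : (∀ i, α i) → ℝ) (i : ι) (x : α i) : ℝ :=
  ∑ s ∈ univ.filter (fun s => s i = x), w s

def IsCoupling (b : ∀ i, α i → ℝ) (w : (∀ i, α i) → ℝ) : Prop :=
  (∀ s, 0 ≤ w s) ∧ ∀ i x, marginal w i x = b i x

lemma marginal_zero (i : ι) : marginal (0 : (∀ i, α i) → ℝ) i = 0 := by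
  ext x; simp [marginal]

lemma marginal_add (w v : (∀ i, α i) → ℝ) (i : ι) :
    marginal (w + v) i = marginal w i + marginal v i := by
  ext x; simp [marginal, sum_add_distrib]

lemma marginal_sub (w v : (∀ i, α i) → ℝ) (i : ι) :
    marginal (w - v) i = marginal w i - marginal v i := by
  ext x; simp [marginal, sum_sub_distrib]

lemma marginal_single (t : ∀ i, α i) (μ : ℝ) (i : ι) :
    marginal (Pi.single t μ) i = Pi.single (t i) μ := by
  ext x
  by_cases hx : t i = x
  · subst hx; simp [marginal, Pi.single_apply]
  · simp [marginal, Pi.single_apply, hx, Ne.symm hx]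

lemma marginal_eq_apply {w : (∀ i, α i) → ℝ} {t : ∀ i, α i} {i : ι}
    (hw : ∀ s, s i = t i → s ≠ t → w s = 0) : marginal w i (t i) = w t :=
  sum_eq_single_of_mem t (by simp) fun s hs hne => hw s (by simpa using hs) hne

lemma apply_eq_zero_of_marginal_eq_zero {w : (∀ i, α i) → ℝ} (hw : ∀ s, 0 ≤ w s)
    {s : ∀ i, α i} {i : ι} (h : marginal w i (s i) = 0) : w s = 0 :=
  (sum_eq_zero_iff_of_nonneg fun s _ => hw s).1 h s (by simp)

lemma isCoupling_zero : IsCoupling (0 : ∀ i, α i → ℝ) 0 :=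
  ⟨fun _ => le_rfl, fun i x => by simp [marginal_zero]⟩

end Marginal

lemma eq_zero_of_not_forall_nonempty {ι : Type*} {α : ι → Type*} [∀ i, Fintype (α i)]
    {b : ∀ i, α i → ℝ} (hb0 : ∀ i j, 0 ≤ b i j) (hsum : ∀ i i', ∑ j, b i j = ∑ j, b i' j)
    (h : ¬ ∀ i, (univ.filter fun j => b i j ≠ 0).Nonempty) : b = 0 := by
  obtain ⟨i₀, hi₀⟩ := not_forall.1 h
  ext i j
  have hrow : ∑ j, b i j = 0 := by
    rw [hsum i i₀]
    exact sum_eq_zero fun j _ => by_contra fun hj => hi₀ ⟨j, by simpa using hj⟩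
  exact (sum_eq_zero_iff_of_nonneg fun j _ => hb0 i j).1 hrow j (mem_univ j)

section NonzeroCount

variable {ι : Type*} [Fintype ι] {α : ι → Type*} [∀ i, Fintype (α i)]

noncomputable def nonzeroCount (b : ∀ i, α i → ℝ) : ℕ := ∑ i, #{j | b i j ≠ 0}

lemma nonzeroCount_le (b : ∀ i, α i → ℝ) : nonzeroCount b ≤ ∑ i, Fintype.card (α i) :=
  sum_le_sum fun _ _ => card_filter_le _ _

lemma eq_zero_of_nonzeroCount_eq_zero {b : ∀ i, α i → ℝ} (h : nonzeroCount b = 0) : b = 0 := by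
  ext i j
  by_contra hij
  have : 0 < nonzeroCount b :=
    sum_pos' (fun _ _ => Nat.zero_le _) ⟨i, mem_univ i, card_pos.2 ⟨j, by simpa using hij⟩⟩
  omega

end NonzeroCount

section Step

variable {n : ℕ} {m : Fin n → ℕ} (b : ∀ i, Fin (m i) → ℝ)
  (h : ∀ i, (univ.filter (fun j => b i j ≠ 0)).Nonempty)

noncomputable def greedySel : ∀ i, Fin (m i) :=
  fun i => (univ.filter (fun j => b i j ≠ 0)).min' (h i)

lemma greedySel_ne_zero (i : Fin n) : b i (greedySel b h i) ≠ 0 :=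
  (mem_filter.1 (min'_mem _ (h i))).2

variable [NeZero n]

noncomputable def greedyMass : ℝ :=
  univ.inf' univ_nonempty (fun i => b i (greedySel b h i))

noncomputable def greedyResidual : ∀ i, Fin (m i) → ℝ :=
  fun i j => if j = greedySel b h i then b i j - greedyMass b h else b i j

lemma greedy_succ_of_nonempty (fuel : ℕ) :
    greedy n m (fuel + 1) b =
      Pi.single (greedySel b h) (greedyMass b h) + greedy n m fuel (greedyResidual b h) := by
  rw [greedy, dif_pos h]
  ext s
  simp only [Pi.add_apply, Pi.single_apply]
  rfl

lemma greedy_succ_of_not_nonempty (fuel : ℕ)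
    (h : ¬ ∀ i, (univ.filter (fun j => b i j ≠ 0)).Nonempty) : greedy n m (fuel + 1) b = 0 := by
  rw [greedy, dif_neg h]

lemma greedyMass_le (i : Fin n) : greedyMass b h ≤ b i (greedySel b h i) :=
  inf'_le _ (mem_univ i)

lemma exists_greedyMass_eq : ∃ i, b i (greedySel b h i) = greedyMass b h := by
  obtain ⟨i, -, hi⟩ := exists_mem_eq_inf' univ_nonempty (fun i => b i (greedySel b h i))
  exact ⟨i, hi.symm⟩

lemma greedyResidual_eq (i : Fin n) :
    greedyResidual b h i = b i - Pi.single (greedySel b h i) (greedyMass b h) := by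
  ext j
  by_cases hj : j = greedySel b h i <;> simp [greedyResidual, hj]

variable {b}

lemma greedyMass_pos (hb0 : ∀ i j, 0 ≤ b i j) : 0 < greedyMass b h := by
  obtain ⟨i, hi⟩ := exists_greedyMass_eq b h
  exact hi ▸ (hb0 i _).lt_of_ne (greedySel_ne_zero b h i).symm

lemma greedyResidual_nonneg (hb0 : ∀ i j, 0 ≤ b i j) (i : Fin n) (j : Fin (m i)) :
    0 ≤ greedyResidual b h i j := by
  by_cases hj : j = greedySel b h i
  · subst hj; simpa [greedyResidual] using greedyMass_le b h i
  · simpa [greedyResidual, hj] using hb0 i j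

lemma sum_greedyResidual (i : Fin n) :
    ∑ j, greedyResidual b h i j = ∑ j, b i j - greedyMass b h := by
  simp [greedyResidual_eq, sum_sub_distrib]

lemma sum_greedyResidual_eq (hsum : ∀ i i', ∑ j, b i j = ∑ j, b i' j) (i i' : Fin n) :
    ∑ j, greedyResidual b h i j = ∑ j, greedyResidual b h i' j := by
  simp only [sum_greedyResidual, hsum i i']

lemma greedyResidual_greedySel {i : Fin n} (hi : b i (greedySel b h i) = greedyMass b h) :
    greedyResidual b h i (greedySel b h i) = 0 := by
  simp [greedyResidual, hi]

lemma greedyResidual_ne_zero_subset (i : Fin n) :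
    univ.filter (fun j => greedyResidual b h i j ≠ 0) ⊆ univ.filter (fun j => b i j ≠ 0) := by
  refine monotone_filter_right _ fun j _ hj => ?_
  by_cases hji : j = greedySel b h i
  · simpa [hji] using greedySel_ne_zero b h i
  · simpa [greedyResidual, hji] using hj

lemma nonzeroCount_greedyResidual_lt : nonzeroCount (greedyResidual b h) < nonzeroCount b := by
  obtain ⟨i₀, hi₀⟩ := exists_greedyMass_eq b h
  refine sum_lt_sum (fun i _ => card_le_card (greedyResidual_ne_zero_subset h i))
    ⟨i₀, mem_univ _, card_lt_card ?_⟩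
  refine (ssubset_iff_of_subset (greedyResidual_ne_zero_subset h i₀)).2
    ⟨greedySel b h i₀, ?_, ?_⟩
  · simpa using greedySel_ne_zero b h i₀
  · simpa using greedyResidual_greedySel h hi₀

lemma isCoupling_single_add_of_isCoupling_greedyResidual (hb0 : ∀ i j, 0 ≤ b i j)
    {v : (∀ i, Fin (m i)) → ℝ} (hv : IsCoupling (greedyResidual b h) v) :
    IsCoupling b (Pi.single (greedySel b h) (greedyMass b h) + v) := by
  refine ⟨fun s => add_nonneg ?_ (hv.1 s), fun i x => ?_⟩
  · by_cases hs : s = greedySel b h <;> simp [hs, (greedyMass_pos h hb0).le]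
  · rw [marginal_add, marginal_single, Pi.add_apply, hv.2, greedyResidual_eq]
    simp

lemma apply_greedySel_of_support_subset {v w : (∀ i, Fin (m i)) → ℝ}
    (hv : IsCoupling (greedyResidual b h) v) (hw : IsCoupling b w)
    (hsupp : support w ⊆ support (Pi.single (greedySel b h) (greedyMass b h) + v)) :
    w (greedySel b h) = greedyMass b h := by
  obtain ⟨i₀, hi₀⟩ := exists_greedyMass_eq b h
  -- `i₀` exhausts its selected point, so the rest of the plan avoids every tuple through it.
  have hv_zero (s : ∀ i, Fin (m i)) (hs : s i₀ = greedySel b h i₀) : v s = 0 :=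
    apply_eq_zero_of_marginal_eq_zero hv.1 (by rw [hs, hv.2, greedyResidual_greedySel h hi₀])
  have hw_zero (s : ∀ i, Fin (m i)) (hs : s i₀ = greedySel b h i₀) (hne : s ≠ greedySel b h) :
      w s = 0 :=
    notMem_support.1 fun hws => by simpa [Pi.single_apply, hne, hv_zero s hs] using hsupp hws
  rw [← marginal_eq_apply hw_zero, hw.2, hi₀]

lemma isCoupling_greedyResidual_of_support_subset {v w : (∀ i, Fin (m i)) → ℝ}
    (hv : IsCoupling (greedyResidual b h) v) (hw : IsCoupling b w)
    (hsupp : support w ⊆ support (Pi.single (greedySel b h) (greedyMass b h) + v)) :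
    IsCoupling (greedyResidual b h) (w - Pi.single (greedySel b h) (greedyMass b h)) ∧
      support (w - Pi.single (greedySel b h) (greedyMass b h)) ⊆ support v := by
  have hsel := apply_greedySel_of_support_subset h hv hw hsupp
  refine ⟨⟨fun s => ?_, fun i x => ?_⟩, fun s hs => ?_⟩
  · by_cases hs : s = greedySel b h
    · simp [hs, hsel]
    · simpa [hs] using hw.1 s
  · rw [marginal_sub, marginal_single, Pi.sub_apply, hw.2, greedyResidual_eq]
    rfl
  · by_cases hs' : s = greedySel b h
    · simp [hs', hsel] at hs
    · have hws := hsupp (show s ∈ support w by simpa [hs'] using hs)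
      rwa [mem_support, Pi.add_apply, Pi.single_eq_of_ne hs', zero_add] at hws

end Step

section Induction

variable {n : ℕ} [NeZero n] {m : Fin n → ℕ}

theorem isCoupling_greedy {fuel : ℕ} {b : ∀ i, Fin (m i) → ℝ} (hb0 : ∀ i j, 0 ≤ b i j)
    (hsum : ∀ i i', ∑ j, b i j = ∑ j, b i' j) (hcount : nonzeroCount b ≤ fuel) :
    IsCoupling b (greedy n m fuel b) := by
  induction fuel generalizing b with
  | zero =>
    rw [eq_zero_of_nonzeroCount_eq_zero (Nat.le_zero.1 hcount)]
    exact isCoupling_zero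
  | succ fuel ih =>
    by_cases h : ∀ i, (univ.filter fun j => b i j ≠ 0).Nonempty
    · have hv := ih (greedyResidual_nonneg h hb0) (sum_greedyResidual_eq h hsum)
        (Nat.le_of_lt_succ ((nonzeroCount_greedyResidual_lt h).trans_le hcount))
      rw [greedy_succ_of_nonempty b h]
      exact isCoupling_single_add_of_isCoupling_greedyResidual h hb0 hv
    · rw [greedy_succ_of_not_nonempty b fuel h, eq_zero_of_not_forall_nonempty hb0 hsum h]
      exact isCoupling_zero

theorem eq_greedy_of_support_subset {fuel : ℕ} {b : ∀ i, Fin (m i) → ℝ}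
    (hb0 : ∀ i j, 0 ≤ b i j) (hsum : ∀ i i', ∑ j, b i j = ∑ j, b i' j)
    (hcount : nonzeroCount b ≤ fuel) {w : (∀ i, Fin (m i)) → ℝ} (hw : IsCoupling b w)
    (hsupp : support w ⊆ support (greedy n m fuel b)) : w = greedy n m fuel b := by
  induction fuel generalizing b w with
  | zero => exact eq_zero_of_support_subset_zero hsupp
  | succ fuel ih =>
    by_cases h : ∀ i, (univ.filter fun j => b i j ≠ 0).Nonempty
    · have hr0 := greedyResidual_nonneg h hb0
      have hrsum := sum_greedyResidual_eq h hsum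
      have hrcount := Nat.le_of_lt_succ ((nonzeroCount_greedyResidual_lt h).trans_le hcount)
      have hv := isCoupling_greedy hr0 hrsum hrcount
      rw [greedy_succ_of_nonempty b h] at hsupp ⊢
      obtain ⟨hw', hsupp'⟩ := isCoupling_greedyResidual_of_support_subset h hv hw hsupp
      rw [← ih hr0 hrsum hrcount hw' hsupp', add_sub_cancel]
    · rw [greedy_succ_of_not_nonempty b fuel h] at hsupp ⊢
      exact eq_zero_of_support_subset_zero hsupp

end Induction

/-- The greedy solution is a vertex of the transport polytope: it is feasible
and there is a cost vector for which it is the unique minimizer. -/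
theorem greedy_is_vertex (n : ℕ) [NeZero n] (m : Fin n → ℕ)
    (d : ∀ i, Fin (m i) → ℝ) (hd0 : ∀ i j, 0 ≤ d i j)
    (hd1 : ∀ i, ∑ j, d i j = 1) :
    ((∀ s : ∀ i, Fin (m i), 0 ≤ greedy n m (∑ i, m i) d s) ∧
      (∀ i (x : Fin (m i)),
        ∑ s ∈ Finset.univ.filter (fun s : ∀ i, Fin (m i) => s i = x),
          greedy n m (∑ i, m i) d s = d i x)) ∧
    ∃ c : (∀ i, Fin (m i)) → ℝ,
      ∀ w' : (∀ i, Fin (m i)) → ℝ,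
        ((∀ s, 0 ≤ w' s) ∧
          (∀ i (x : Fin (m i)),
            ∑ s ∈ Finset.univ.filter (fun s : ∀ i, Fin (m i) => s i = x), w' s = d i x)) →
        (∑ s, c s * greedy n m (∑ i, m i) d s ≤ ∑ s, c s * w' s) ∧
        ((∑ s, c s * w' s = ∑ s, c s * greedy n m (∑ i, m i) d s) →
          w' = greedy n m (∑ i, m i) d) := by
  have hsum : ∀ i i', ∑ j, d i j = ∑ j, d i' j := fun i i' => by rw [hd1, hd1]
  have hcount : nonzeroCount d ≤ ∑ i, m i := by simpa using nonzeroCount_le d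
  exact ⟨isCoupling_greedy hd0 hsum hcount, exists_cost_unique_minimizer (IsCoupling d)
    (fun _ hw => hw.1) fun _ hw => eq_greedy_of_support_subset hd0 hsum hcount hw⟩
end

section
/- Every vertex of the polytope {w ∈ R^N : Aw = d, w ≥ 0}, where A is an m × N real matrix of rank r, has at most r nonzero coordinates. In particular, since the barycenter constraint matrix for measures of sizes m_1, ..., m_n has rank at most Σ m_i − n + 1 (each of the n groups of rows sums to the all-ones row vector), every vertex of the barycenter transport polytope has at most Σ_{i=1}^n m_i − n + 1 nonzero coordinates. -/
/-
If the columns of `A` indexed by the support of a vertex `w` admitted a nonzero kernel vector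
`z`, then `w + εz` and `w - εz` would both lie in the polyhedron for small `ε > 0`, and `w` would
be their midpoint. Hence these columns are linearly independent, and there are at most `rank A`
of them. For the barycenter matrix every group of rows sums to the all-ones vector, so deleting
one row from each group but one does not shrink the row space; at most `∑ mᵢ - n + 1` rows remain.
-/

open Finset Filter Topology Matrix

theorem eq_zero_of_add_mem_of_sub_mem_of_mem_extremePoints {𝕜 E : Type*} [Field 𝕜] [LinearOrder 𝕜]
    [IsStrictOrderedRing 𝕜] [AddCommGroup E] [Module 𝕜 E] {S : Set E} {x z : E}
    (hx : x ∈ S.extremePoints 𝕜) (hadd : x + z ∈ S) (hsub : x - z ∈ S) : z = 0 := by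
  have hmid : x ∈ openSegment 𝕜 (x + z) (x - z) :=
    ⟨1 / 2, 1 / 2, by norm_num, by norm_num, by norm_num, by module⟩
  simpa using (mem_extremePoints.1 hx).2 _ hadd _ hsub hmid |>.1

theorem exists_pos_forall_abs_mul_le {ι : Type*} [Finite ι] {w z : ι → ℝ}
    (hz : Function.support z ⊆ Function.support w) (hw : ∀ j, 0 ≤ w j) :
    ∃ ε > 0, ∀ j, |ε * z j| ≤ w j := by
  have hj : ∀ j, ∀ᶠ ε in 𝓝[>] (0 : ℝ), |ε * z j| ≤ w j := by
    intro j
    by_cases hzj : z j = 0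
    · simp [hzj, hw j]
    have hwj : 0 < w j := (hw j).lt_of_ne' (hz hzj)
    have hlim : Tendsto (fun ε : ℝ => |ε * z j|) (𝓝 0) (𝓝 0) := by
      simpa using ((continuous_mul_const (z j)).abs.tendsto 0)
    exact nhdsWithin_le_nhds (hlim.eventually (ge_mem_nhds hwj))
  exact ((eventually_all.2 hj).and self_mem_nhdsWithin).exists.imp fun ε h => ⟨h.2, h.1⟩

theorem Matrix.eq_zero_of_mulVec_eq_zero_of_support_subset {m n : Type*} [Fintype n]
    {A : Matrix m n ℝ} {d : m → ℝ} {w z : n → ℝ}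
    (hw : w ∈ Set.extremePoints ℝ {w : n → ℝ | A *ᵥ w = d ∧ ∀ j, 0 ≤ w j})
    (hz : A *ᵥ z = 0) (hsupp : Function.support z ⊆ Function.support w) : z = 0 := by
  obtain ⟨ε, hε, hbound⟩ := exists_pos_forall_abs_mul_le hsupp hw.1.2
  have hAεz : A *ᵥ (ε • z) = 0 := by rw [mulVec_smul, hz, smul_zero]
  have hεz : ε • z = 0 := eq_zero_of_add_mem_of_sub_mem_of_mem_extremePoints hw
    ⟨by rw [mulVec_add, hAεz, add_zero, hw.1.1], fun j => by
      simpa [neg_le_iff_add_nonneg'] using (abs_le.1 (hbound j)).1⟩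
    ⟨by rw [mulVec_sub, hAεz, sub_zero, hw.1.1], fun j => by
      simpa using (abs_le.1 (hbound j)).2⟩
  exact (smul_eq_zero.1 hεz).resolve_left hε.ne'

theorem Matrix.card_le_rank_of_forall_mulVec_eq_zero {K m n : Type*} [Field K] [Fintype n]
    (A : Matrix m n K) (S : Finset n)
    (h : ∀ z : n → K, A *ᵥ z = 0 → Function.support z ⊆ S → z = 0) : S.card ≤ A.rank := by
  set f := A.mulVecLin ∘ₗ Function.ExtendByZero.linearMap K ((↑) : S → n)
  have hf : Function.Injective f := by
    rw [← LinearMap.ker_eq_bot, LinearMap.ker_eq_bot']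
    intro c hc
    have hsupp : Function.support (Function.extend ((↑) : S → n) c 0) ⊆ S := by
      intro j hj
      by_contra hjS
      exact hj (Function.extend_apply' _ _ _ fun ⟨a, ha⟩ => hjS (ha ▸ a.2))
    exact Function.extend_injective Subtype.val_injective (0 : n → K)
      ((h _ hc hsupp).trans (Function.extend_zero _).symm)
  calc S.card = Module.finrank K (LinearMap.range f) := by
        rw [LinearMap.finrank_range_of_inj hf, Module.finrank_fintype_fun_eq_card,
          Fintype.card_coe]
    _ ≤ A.rank := Submodule.finrank_mono (LinearMap.range_comp_le_range _ _)

theorem Matrix.card_support_le_rank_of_mem_extremePoints {m n : Type*} [Fintype n]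
    {A : Matrix m n ℝ} {d : m → ℝ} {w : n → ℝ}
    (hw : w ∈ Set.extremePoints ℝ {w : n → ℝ | A *ᵥ w = d ∧ ∀ j, 0 ≤ w j}) :
    #{j | w j ≠ 0} ≤ A.rank :=
  A.card_le_rank_of_forall_mulVec_eq_zero _ fun _ hz hsupp =>
    eq_zero_of_mulVec_eq_zero_of_support_subset hw hz (by simpa using hsupp)

theorem Matrix.rank_le_card_of_row_mem_span {K m n : Type*} [Field K] [Finite m] [Fintype n]
    (A : Matrix m n K) (P : Finset m) (h : ∀ i, A.row i ∈ Submodule.span K (A.row '' P)) :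
    A.rank ≤ P.card := by
  classical
  have hspan : Submodule.span K (Set.range A.row) ≤
      Submodule.span K (P.image A.row : Set (n → K)) := by
    rw [Submodule.span_le, Set.range_subset_iff, coe_image]
    exact h
  calc A.rank ≤ Module.finrank K (Submodule.span K (P.image A.row : Set (n → K))) :=
        A.rank_eq_finrank_span_row ▸ Submodule.finrank_mono hspan
    _ ≤ (P.image A.row).card := finrank_span_finset_le_card _
    _ ≤ P.card := card_image_le

theorem Matrix.rank_le_card_sub_of_sum_rows_eq {K ι n : Type*} [Field K] [Fintype ι] [Fintype n]
    {κ : ι → Type*} [∀ i, Fintype (κ i)] [∀ i, Nonempty (κ i)]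
    (A : Matrix (Σ i, κ i) n K) (h : ∀ i i', ∑ j, A ⟨i, j⟩ = ∑ j, A ⟨i', j⟩) :
    A.rank ≤ Fintype.card (Σ i, κ i) - (Fintype.card ι - 1) := by
  classical
  cases isEmpty_or_nonempty ι
  · simpa using A.rank_le_card_height
  obtain ⟨i₀⟩ := ‹Nonempty ι›
  let j₀ : ∀ i, κ i := fun _ => Classical.arbitrary _
  -- Row `⟨i, j₀ i⟩` is redundant: it is the sum of group `i₀` minus the other rows of group `i`.
  set Q : Finset (Σ i, κ i) := (univ.erase i₀).image fun i => ⟨i, j₀ i⟩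
  have hQ : ∀ i j, (⟨i, j⟩ : Σ i, κ i) ∈ Q ↔ i ≠ i₀ ∧ j = j₀ i := by
    intro i j
    simp only [Q, mem_image, mem_erase, mem_univ, and_true, Sigma.mk.inj_iff]
    constructor
    · rintro ⟨i', hi', rfl, hj⟩
      exact ⟨hi', (eq_of_heq hj).symm⟩
    · rintro ⟨hi, rfl⟩
      exact ⟨i, hi, rfl, HEq.rfl⟩
  have hQcard : Q.card = Fintype.card ι - 1 := by
    rw [card_image_of_injective _ fun _ _ hij => congrArg Sigma.fst hij, card_erase_of_mem
      (mem_univ _), card_univ]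
  refine (A.rank_le_card_of_row_mem_span Qᶜ ?_).trans (by rw [card_compl, hQcard])
  rintro ⟨i, j⟩
  by_cases hij : ⟨i, j⟩ ∈ Q
  · obtain ⟨hi, rfl⟩ := (hQ i j).1 hij
    have hrow : A.row ⟨i, j₀ i⟩ = ∑ j, A ⟨i₀, j⟩ - ∑ j ∈ univ.erase (j₀ i), A ⟨i, j⟩ := by
      rw [h i₀ i, ← add_sum_erase _ _ (mem_univ (j₀ i)), add_sub_cancel_right]
      rfl
    rw [hrow]
    refine sub_mem (sum_mem fun j _ => ?_) (sum_mem fun j hj => ?_) <;>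
      refine Submodule.subset_span ⟨_, ?_, rfl⟩ <;> rw [coe_compl, Set.mem_compl_iff, mem_coe, hQ]
    · exact fun h' => h'.1 rfl
    · exact fun h' => ne_of_mem_erase hj h'.2
  · exact Submodule.subset_span ⟨_, by simpa using hij, rfl⟩

def marginalMatrix {ι : Type*} (κ : ι → Type*) [∀ i, DecidableEq (κ i)] :
    Matrix (Σ i, κ i) (∀ i, κ i) ℝ :=
  Matrix.of fun p s => if s p.1 = p.2 then 1 else 0

theorem rank_marginalMatrix_le {ι : Type*} [Fintype ι] [DecidableEq ι] (κ : ι → Type*)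
    [∀ i, Fintype (κ i)] [∀ i, DecidableEq (κ i)] [∀ i, Nonempty (κ i)] :
    (marginalMatrix κ).rank ≤ ∑ i, Fintype.card (κ i) - Fintype.card ι + 1 := by
  have hsum : ∀ i, ∑ j, marginalMatrix κ ⟨i, j⟩ = 1 := fun i => by
    ext s
    simp [marginalMatrix]
  refine ((marginalMatrix κ).rank_le_card_sub_of_sum_rows_eq fun i i' => ?_).trans ?_
  · rw [hsum, hsum]
  · rw [Fintype.card_sigma]
    omega

open scoped Classical in
/-- Every vertex (extreme point) of `{w : Aw = d, w ≥ 0}` has at most `rank A`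
nonzero coordinates; in particular, since the barycenter constraint matrix has
rank at most `∑ m i − n + 1`, every vertex of the barycenter transport polytope
has at most `∑ m i − n + 1` nonzero coordinates. -/
theorem vertex_sparsity :
    (∀ (M N r : ℕ) (A : Matrix (Fin M) (Fin N) ℝ) (d : Fin M → ℝ),
      A.rank ≤ r →
      ∀ w ∈ Set.extremePoints ℝ
        {w : Fin N → ℝ | A.mulVec w = d ∧ ∀ j, 0 ≤ w j},
        (Finset.univ.filter (fun j => w j ≠ 0)).card ≤ r) ∧
    (∀ (n : ℕ) (m : Fin n → ℕ), (∀ i, 1 ≤ m i) →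
      (Matrix.of (fun (p : Σ i : Fin n, Fin (m i)) (s : ∀ i, Fin (m i)) =>
          if s p.1 = p.2 then (1 : ℝ) else 0)).rank ≤ ∑ i, m i - n + 1 ∧
      ∀ (d : (Σ i : Fin n, Fin (m i)) → ℝ)
        (w : (∀ i, Fin (m i)) → ℝ),
        w ∈ Set.extremePoints ℝ
          {w : (∀ i, Fin (m i)) → ℝ |
            (Matrix.of (fun (p : Σ i : Fin n, Fin (m i)) (s : ∀ i, Fin (m i)) =>
              if s p.1 = p.2 then (1 : ℝ) else 0)).mulVec w = d ∧ ∀ s, 0 ≤ w s} →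
        (Finset.univ.filter (fun s : ∀ i, Fin (m i) => w s ≠ 0)).card
          ≤ ∑ i, m i - n + 1) := by
  refine ⟨fun M N r A d hr w hw => (card_support_le_rank_of_mem_extremePoints hw).trans hr,
    fun n m hm => ?_⟩
  have : ∀ i, Nonempty (Fin (m i)) := fun i => Fin.pos_iff_nonempty.1 (hm i)
  have hrank : (marginalMatrix fun i => Fin (m i)).rank ≤ ∑ i, m i - n + 1 := by
    simpa using rank_marginalMatrix_le fun i => Fin (m i)
  exact ⟨hrank, fun d w hw => (card_support_le_rank_of_mem_extremePoints hw).trans hrank⟩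
end
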